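/- Let T be a (d₁,d₂)-biregular tree with d₁,d₂ ≥ 3 and Γ ≤ Aut(T) a tree lattice. Then the associated Markov chain (Mₙ) on EQ is positive recurrent, i.e. it admits a stationary probability measure. -/

import Mathlib

open Filter Topology MeasureTheory

attribute [local instance] Classical.propDecidable

namespace TreeDyn

variable {V : Type*}

/-- The type of directed edges of a simple graph. -/
def DEdge (T : SimpleGraph V) : Type _ := {p : V × V // T.Adj p.1 p.2}

/-- `T` is a `(d₁,d₂)`-biregular tree: a tree whose vertex set admits a bipartition such
that every vertex of one class has degree `d₁` and every vertex of the other class has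
degree `d₂`. -/
def IsBiregularTree (T : SimpleGraph V) (d₁ d₂ : ℕ) : Prop :=
  T.Connected ∧ T.IsAcyclic ∧
    ∃ c : V → Bool,
      (∀ u v, T.Adj u v → c u ≠ c v) ∧
      (∀ v, c v = true → Nat.card (T.neighborSet v) = d₁) ∧
      (∀ v, c v = false → Nat.card (T.neighborSet v) = d₂)

/-- A permutation of the vertices is an automorphism of `T` acting without edge
inversion if it preserves adjacency and moves every vertex an even distance. -/
def IsTreeAut (T : SimpleGraph V) (σ : Equiv.Perm V) : Prop :=
  (∀ u v, T.Adj (σ u) (σ v) ↔ T.Adj u v) ∧ ∀ v, Even (T.dist v (σ v))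

variable (T : SimpleGraph V) (Λ : Subgroup (Equiv.Perm V))

/-- Two vertices are related if they lie in the same `Λ`-orbit. -/
def vrel (u v : V) : Prop := ∃ γ ∈ Λ, γ u = v

/-- The vertex set of the quotient graph `Q = Λ∖T`. -/
def VQ := Quot (vrel Λ)

/-- Projection of vertices to the quotient graph. -/
def πV : V → VQ Λ := Quot.mk _

/-- Two directed edges are related if they lie in the same `Λ`-orbit. -/
def erel (e f : DEdge T) : Prop :=
  ∃ γ ∈ Λ, γ e.1.1 = f.1.1 ∧ γ e.1.2 = f.1.2

/-- The directed edge set of the quotient graph `Q = Λ∖T`. -/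
def EQ := Quot (erel T Λ)

/-- Projection of directed edges to the quotient graph. -/
def πE : DEdge T → EQ T Λ := Quot.mk _

/-- The initial vertex `∂₀ e` of a quotient edge. -/
noncomputable def tailQ (e : EQ T Λ) : VQ Λ := πV Λ (Quot.out e).1.1

/-- The terminal vertex `∂₁ e` of a quotient edge. -/
noncomputable def headQ (e : EQ T Λ) : VQ Λ := πV Λ (Quot.out e).1.2

/-- The reversal `ē` of a quotient edge. -/
noncomputable def barQ (e : EQ T Λ) : EQ T Λ :=
  πE T Λ ⟨((Quot.out e).1.2, (Quot.out e).1.1), (Quot.out e).2.symm⟩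

/-- The order of the stabilizer of a vertex in `Λ`. -/
noncomputable def stabV (v : V) : ℕ :=
  Nat.card {γ : Λ // (γ : Equiv.Perm V) v = v}

/-- The order of the pointwise stabilizer of a directed edge in `Λ`. -/
noncomputable def stabE (e : DEdge T) : ℕ :=
  Nat.card {γ : Λ // (γ : Equiv.Perm V) e.1.1 = e.1.1 ∧ (γ : Equiv.Perm V) e.1.2 = e.1.2}

/-- The index map of the edge-indexed graph: `ind e = [Λ_{∂₀ẽ} : Λ_ẽ]` for any lift `ẽ`. -/
noncomputable def indQ (e : EQ T Λ) : ℕ :=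
  stabV Λ (Quot.out e).1.1 / stabE T Λ (Quot.out e)

/-- The degree of a vertex of the quotient graph: the degree in `T` of any of its lifts. -/
noncomputable def degQ (v : VQ Λ) : ℕ := Nat.card (T.neighborSet (Quot.out v))

/-- `Δ(e) = ind(ē)/ind(e)`. -/
noncomputable def deltaQ (e : EQ T Λ) : ℝ :=
  (indQ T Λ (barQ T Λ e) : ℝ) / (indQ T Λ e : ℝ)

/-- `Λ` is a tree lattice: a discrete subgroup (finite vertex stabilizers) of `Aut T`
with finite covolume, i.e. `Σ_{v ∈ VQ} N_o(v)⁻¹ < ∞` where `N_o` is the multiplicative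
function along paths determined by `Δ`. -/
def IsTreeLattice : Prop :=
  (∀ γ ∈ Λ, IsTreeAut T γ) ∧
  (∀ v : V, Finite {γ : Λ // (γ : Equiv.Perm V) v = v}) ∧
  ∃ (o : VQ Λ) (N : VQ Λ → ℝ),
    N o = 1 ∧ (∀ v, 0 < N v) ∧
    (∀ e : EQ T Λ, N (headQ T Λ e) = deltaQ T Λ e * N (tailQ T Λ e)) ∧
    Summable (fun v : VQ Λ => (N v)⁻¹)

/-- The transition kernel of the Markov chain associated to `Λ` on the directed edges
of the quotient graph. -/
noncomputable def kerP (e f : EQ T Λ) : ℝ :=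
  if headQ T Λ e = tailQ T Λ f then
    (if f = barQ T Λ e then ((indQ T Λ f : ℝ) - 1) else (indQ T Λ f : ℝ)) /
      ((degQ T Λ (headQ T Λ e) : ℝ) - 1)
  else 0

/-- The `n`-step transition kernel. -/
noncomputable def kerPn : ℕ → EQ T Λ → EQ T Λ → ℝ
  | 0, e, f => if e = f then 1 else 0
  | n + 1, e, f => ∑' g : EQ T Λ, kerPn n e g * kerP T Λ g f

/-- Adjacency in the quotient graph. -/
def AdjQ (u v : VQ Λ) : Prop :=
  ∃ e : EQ T Λ, tailQ T Λ e = u ∧ headQ T Λ e = v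

/-- Graph distance on the quotient graph. -/
noncomputable def distQ (u v : VQ Λ) : ℕ :=
  sInf {n : ℕ | ∃ f : ℕ → VQ Λ, f 0 = u ∧ f n = v ∧ ∀ i < n, AdjQ T Λ (f i) (f (i + 1))}

/-- Distance from a finite set of vertices of the quotient graph. -/
noncomputable def distToF (F : Finset (VQ Λ)) (v : VQ Λ) : ℕ :=
  sInf {n : ℕ | ∃ u ∈ F, distQ T Λ u v = n}

/-- `F` is a finite part for `Λ`: the complement of `F` in the quotient graph is a
disjoint union of finitely many open Nagao rays. -/
def IsFinitePart (F : Finset (VQ Λ)) : Prop :=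
  ∃ (k : ℕ) (ray : Fin k → ℕ → VQ Λ),
    (∀ v : VQ Λ, v ∉ F ↔ ∃ i n, ray i n = v) ∧
    (∀ i n j m, ray i n = ray j m → i = j ∧ n = m) ∧
    (∀ i n, ∃ e : EQ T Λ, tailQ T Λ e = ray i n ∧ headQ T Λ e = ray i (n + 1)) ∧
    (∀ i n, ∀ e f : EQ T Λ, tailQ T Λ e = ray i n → headQ T Λ e = ray i (n + 1) →
      tailQ T Λ f = ray i n → headQ T Λ f = ray i (n + 1) → e = f) ∧
    (∀ i n, ∀ e : EQ T Λ, tailQ T Λ e = ray i n → headQ T Λ e ∉ F →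
      headQ T Λ e = ray i (n + 1) ∨ ∃ m, n = m + 1 ∧ headQ T Λ e = ray i m) ∧
    (∀ i n, ∀ e : EQ T Λ, tailQ T Λ e = ray i n → headQ T Λ e = ray i (n + 1) →
      indQ T Λ e = 1) ∧
    (∀ i n, ∀ e : EQ T Λ, tailQ T Λ e = ray i (n + 1) → headQ T Λ e = ray i n →
      indQ T Λ e = degQ T Λ (ray i n) - 1)

/-- A tree lattice is geometrically finite if its quotient graph contains a nonempty
finite subgraph whose complement is a disjoint union of finitely many open Nagao rays. -/
def IsGeomFinite : Prop := ∃ F : Finset (VQ Λ), F.Nonempty ∧ IsFinitePart T Λ F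

/-- The mass that the projection to `VQ` of the uniform measure on the sphere
`S(vb,n)` gives to the vertex `q` of the quotient graph. -/
noncomputable def sphPush (vb : V) (n : ℕ) (q : VQ Λ) : ℝ :=
  (Nat.card {w : V // T.dist vb w = n ∧ πV Λ w = q} : ℝ) /
    (Nat.card {w : V // T.dist vb w = n} : ℝ)

/-- `ℙ_e(τ = i)` : the probability that the Markov chain started at `e` hits the set of
edges with terminal vertex in `F` for the first time at time `i`. -/
noncomputable def hitP (F : Finset (VQ Λ)) : ℕ → EQ T Λ → ℝ
  | 0, e => if headQ T Λ e ∈ F then 1 else 0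
  | i + 1, e => if headQ T Λ e ∈ F then 0 else ∑' f : EQ T Λ, kerP T Λ e f * hitP F i f

/-- `ℙ_e(τ' = i)` where `τ' = min {n | n ≥ τ, 2 ∣ n}`. -/
noncomputable def hitP' (F : Finset (VQ Λ)) (i : ℕ) (e : EQ T Λ) : ℝ :=
  if 2 ∣ i then hitP T Λ F i e + (if 1 ≤ i then hitP T Λ F (i - 1) e else 0) else 0

/-- `(Ω₀, Ω₁)` is the pair of cyclic classes of the (period two) kernel `P`. -/
def IsCyclicPair (Ω₀ Ω₁ : Set (EQ T Λ)) : Prop :=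
  (∀ e, e ∈ Ω₀ ∨ e ∈ Ω₁) ∧ (∀ e, ¬(e ∈ Ω₀ ∧ e ∈ Ω₁)) ∧
  (∀ e ∈ Ω₀, ∀ f, kerP T Λ e f ≠ 0 → f ∈ Ω₁) ∧
  (∀ e ∈ Ω₁, ∀ f, kerP T Λ e f ≠ 0 → f ∈ Ω₀)

/-- `Ω` is a cyclic class of the kernel `P`. -/
def IsCyclicClass (Ω : Set (EQ T Λ)) : Prop :=
  ∃ Ω', IsCyclicPair T Λ Ω Ω' ∨ IsCyclicPair T Λ Ω' Ω

/-!
The measure `μ(e) = ind(e) / N(∂₀e)` on `EQ` is stationary and has finite mass, so its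
normalization is a stationary probability measure.

Stationarity: the cocycle relation `N(∂₁e) = Δ(e) N(∂₀e)` says exactly that `μ(ē) = μ(e)`. Hence
the mass flowing into `e` comes from the reversals `ḡ` of the edges `g` leaving `v = ∂₀e` and equals
`Σ_{∂₀g = v} μ(g) (ind e - [g = e]) / (deg v - 1) = ind(e) / N(v)`, because the edges of `T`
leaving a lift `ṽ` of `v` that project to `g` form one orbit of the stabilizer of `ṽ`, of size
`ind g` by the orbit-stabilizer theorem, so that `Σ_{∂₀g = v} ind g = deg v`.

Finite mass: grouping the edges by their origin, `Σ_e μ(e) = Σ_v deg(v) / N(v)`, which is at most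
`max d₁ d₂ · Σ_v N(v)⁻¹ < ∞`.
-/

open MulAction

lemma exists_stationary_probability_of_tsum_pos {α : Type*} (P : α → α → ℝ) (μ : α → ℝ)
    (hμ : ∀ a, 0 ≤ μ a) (hpos : 0 < ∑' a, μ a) (hstat : ∀ b, ∑' a, μ a * P a b = μ b) :
    ∃ π : α → ℝ, (∀ a, 0 ≤ π a) ∧ ∑' a, π a = 1 ∧ ∀ b, ∑' a, π a * P a b = π b := by
  refine ⟨fun a => μ a / ∑' a, μ a, fun a => div_nonneg (hμ a) hpos.le, ?_, fun b => ?_⟩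
  · rw [tsum_div_const, div_self hpos.ne']
  · simp_rw [div_mul_eq_mul_div, tsum_div_const, hstat]

lemma vrel_equivalence : Equivalence (vrel Λ) where
  refl _ := ⟨1, Λ.one_mem, rfl⟩
  symm := by
    rintro u v ⟨γ, hγ, rfl⟩
    exact ⟨γ⁻¹, Λ.inv_mem hγ, by simp⟩
  trans := by
    rintro u v w ⟨γ, hγ, rfl⟩ ⟨δ, hδ, rfl⟩
    exact ⟨δ * γ, Λ.mul_mem hδ hγ, rfl⟩

lemma erel_equivalence : Equivalence (erel T Λ) where
  refl _ := ⟨1, Λ.one_mem, rfl, rfl⟩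
  symm := by
    rintro d d' ⟨γ, hγ, h₁, h₂⟩
    exact ⟨γ⁻¹, Λ.inv_mem hγ, by simp [← h₁], by simp [← h₂]⟩
  trans := by
    rintro d d' d'' ⟨γ, hγ, h₁, h₂⟩ ⟨δ, hδ, h₁', h₂'⟩
    exact ⟨δ * γ, Λ.mul_mem hδ hγ, by simp [h₁, h₁'], by simp [h₂, h₂']⟩

lemma πV_eq_πV_iff {u v : V} : πV Λ u = πV Λ v ↔ vrel Λ u v :=
  Quot.eq.trans (vrel_equivalence Λ).eqvGen_iff

lemma πE_eq_πE_iff {d d' : DEdge T} : πE T Λ d = πE T Λ d' ↔ erel T Λ d d' :=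
  Quot.eq.trans (erel_equivalence T Λ).eqvGen_iff

lemma erel_out_πE (d : DEdge T) : erel T Λ (Quot.out (πE T Λ d)) d :=
  (πE_eq_πE_iff T Λ).1 (Quot.out_eq _)

lemma tailQ_πE (d : DEdge T) : tailQ T Λ (πE T Λ d) = πV Λ d.1.1 := by
  obtain ⟨γ, hγ, h₁, -⟩ := erel_out_πE T Λ d
  exact (πV_eq_πV_iff Λ).2 ⟨γ, hγ, h₁⟩

lemma headQ_πE (d : DEdge T) : headQ T Λ (πE T Λ d) = πV Λ d.1.2 := by
  obtain ⟨γ, hγ, -, h₂⟩ := erel_out_πE T Λ d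
  exact (πV_eq_πV_iff Λ).2 ⟨γ, hγ, h₂⟩

lemma πE_out (e : EQ T Λ) : πE T Λ (Quot.out e) = e := Quot.out_eq e

lemma barQ_πE (d : DEdge T) :
    barQ T Λ (πE T Λ d) = πE T Λ ⟨(d.1.2, d.1.1), d.2.symm⟩ := by
  obtain ⟨γ, hγ, h₁, h₂⟩ := erel_out_πE T Λ d
  exact (πE_eq_πE_iff T Λ).2 ⟨γ, hγ, h₂, h₁⟩

@[simp]
lemma barQ_barQ (e : EQ T Λ) : barQ T Λ (barQ T Λ e) = e :=
  (barQ_πE T Λ _).trans (πE_out T Λ e)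

@[simp]
lemma tailQ_barQ (e : EQ T Λ) : tailQ T Λ (barQ T Λ e) = headQ T Λ e :=
  tailQ_πE T Λ _

@[simp]
lemma headQ_barQ (e : EQ T Λ) : headQ T Λ (barQ T Λ e) = tailQ T Λ e :=
  headQ_πE T Λ _

noncomputable def headFiberEquivTailFiber (v : VQ Λ) :
    {e : EQ T Λ // headQ T Λ e = v} ≃ {f : EQ T Λ // tailQ T Λ f = v} where
  toFun e := ⟨barQ T Λ e, by simpa using e.2⟩
  invFun f := ⟨barQ T Λ f, by simpa using f.2⟩
  left_inv e := Subtype.ext (barQ_barQ T Λ e)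
  right_inv f := Subtype.ext (barQ_barQ T Λ f)

lemma stabV_eq_card_stabilizer (a : V) : stabV Λ a = Nat.card (stabilizer Λ a) := rfl

lemma stabE_eq_card_stabilizer (d : DEdge T) : stabE T Λ d = Nat.card (stabilizer Λ d.1) :=
  Nat.card_congr <| Equiv.subtypeEquivRight fun γ => (Prod.ext_iff : γ • d.1 = d.1 ↔ _).symm

lemma indQ_πE (d : DEdge T) : indQ T Λ (πE T Λ d) = stabV Λ d.1.1 / stabE T Λ d := by
  obtain ⟨γ, hγ, h₁, h₂⟩ := erel_out_πE T Λ d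
  have hV : d.1.1 = (⟨γ, hγ⟩ : Λ) • (Quot.out (πE T Λ d)).1.1 := h₁.symm
  have hE : d.1 = (⟨γ, hγ⟩ : Λ) • (Quot.out (πE T Λ d)).1 := Prod.ext h₁.symm h₂.symm
  rw [indQ, stabV_eq_card_stabilizer, stabV_eq_card_stabilizer, stabE_eq_card_stabilizer,
    stabE_eq_card_stabilizer, Nat.card_congr (stabilizerEquivStabilizer hV).toEquiv,
    Nat.card_congr (stabilizerEquivStabilizer hE).toEquiv]

lemma indQ_πE_eq_card_orbit (hFin : ∀ v : V, Finite {γ : Λ // (γ : Equiv.Perm V) v = v})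
    (d : DEdge T) : indQ T Λ (πE T Λ d) = Nat.card (orbit (stabilizer Λ d.1.1) d.1.2) := by
  have : Finite (stabilizer Λ d.1.1) := hFin d.1.1
  set H := stabilizer (stabilizer Λ d.1.1) d.1.2
  have hE : stabE T Λ d = Nat.card H :=
    Nat.card_congr <| (Equiv.subtypeSubtypeEquivSubtypeInter _ _).symm
  rw [indQ_πE, stabV_eq_card_stabilizer, hE, ← H.index_mul_card, index_stabilizer,
    Nat.card_coe_set_eq, Nat.mul_div_cancel _ Nat.card_pos]

lemma indQ_pos (hFin : ∀ v : V, Finite {γ : Λ // (γ : Equiv.Perm V) v = v}) (e : EQ T Λ) :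
    0 < indQ T Λ e := by
  rw [← πE_out T Λ e, indQ_πE_eq_card_orbit T Λ hFin]
  have : Finite (stabilizer Λ (Quot.out e).1.1) := hFin _
  have : Finite (orbit (stabilizer Λ (Quot.out e).1.1) (Quot.out e).1.2) :=
    (Set.finite_range _).to_subtype
  have : Nonempty (orbit (stabilizer Λ (Quot.out e).1.1) (Quot.out e).1.2) :=
    ⟨⟨_, mem_orbit_self _⟩⟩
  exact Nat.card_pos

lemma πE_eq_πE_iff_mem_orbit {a b b' : V} (h : T.Adj a b) (h' : T.Adj a b') :
    πE T Λ ⟨(a, b), h⟩ = πE T Λ ⟨(a, b'), h'⟩ ↔ b' ∈ orbit (stabilizer Λ a) b := by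
  refine (πE_eq_πE_iff T Λ).trans ?_
  rw [mem_orbit_iff]
  constructor
  · rintro ⟨γ, hγ, h₁, h₂⟩
    exact ⟨⟨⟨γ, hγ⟩, h₁⟩, h₂⟩
  · rintro ⟨⟨γ, h₁⟩, h₂⟩
    exact ⟨γ, γ.2, h₁, h₂⟩

lemma adj_of_mem_orbit_stabilizer (hAut : ∀ γ ∈ Λ, IsTreeAut T γ) {a b b' : V}
    (h : T.Adj a b) (hb' : b' ∈ orbit (stabilizer Λ a) b) : T.Adj a b' := by
  obtain ⟨⟨γ, hγa⟩, rfl⟩ := hb'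
  have hadj := ((hAut γ γ.2).1 a b).2 h
  rwa [show (γ : Equiv.Perm V) a = a from hγa] at hadj

noncomputable def neighborToEdge (v : VQ Λ) (w : T.neighborSet (Quot.out v)) :
    {f : EQ T Λ // tailQ T Λ f = v} :=
  ⟨πE T Λ ⟨(Quot.out v, w), w.2⟩, (tailQ_πE T Λ _).trans (Quot.out_eq v)⟩

lemma neighborToEdge_surjective (hAut : ∀ γ ∈ Λ, IsTreeAut T γ) (v : VQ Λ) :
    Function.Surjective (neighborToEdge T Λ v) := by
  rintro ⟨f, rfl⟩
  obtain ⟨γ, hγ, h₁⟩ : vrel Λ (Quot.out f).1.1 (Quot.out (tailQ T Λ f)) :=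
    (πV_eq_πV_iff Λ).1 (Quot.out_eq (tailQ T Λ f)).symm
  have hadj : T.Adj (Quot.out (tailQ T Λ f)) (γ (Quot.out f).1.2) := by
    rw [← h₁]
    exact ((hAut γ hγ).1 _ _).2 (Quot.out f).2
  exact ⟨⟨_, hadj⟩, Subtype.ext <|
    ((πE_eq_πE_iff T Λ).2 ⟨γ, hγ, h₁, rfl⟩).symm.trans (πE_out T Λ f)⟩

lemma finite_tailFiber (hAut : ∀ γ ∈ Λ, IsTreeAut T γ) (v : VQ Λ)
    [Finite (T.neighborSet (Quot.out v))] : Finite {f : EQ T Λ // tailQ T Λ f = v} :=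
  Finite.of_surjective _ (neighborToEdge_surjective T Λ hAut v)

lemma card_neighborToEdge_fiber (hAut : ∀ γ ∈ Λ, IsTreeAut T γ)
    (hFin : ∀ v : V, Finite {γ : Λ // (γ : Equiv.Perm V) v = v})
    (v : VQ Λ) (w₀ : T.neighborSet (Quot.out v)) :
    Nat.card {w // neighborToEdge T Λ v w = neighborToEdge T Λ v w₀} =
      indQ T Λ (neighborToEdge T Λ v w₀) := by
  rw [show indQ T Λ (neighborToEdge T Λ v w₀) = _ from
    indQ_πE_eq_card_orbit T Λ hFin ⟨(Quot.out v, w₀), w₀.2⟩]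
  exact Nat.card_congr <| (Equiv.subtypeEquivRight fun w =>
      Subtype.ext_iff.trans ((πE_eq_πE_iff_mem_orbit T Λ w.2 w₀.2).trans mem_orbit_symm)).trans
    (Equiv.subtypeSubtypeEquivSubtype (adj_of_mem_orbit_stabilizer T Λ hAut w₀.2))

lemma tsum_indQ_tailFiber (hAut : ∀ γ ∈ Λ, IsTreeAut T γ)
    (hFin : ∀ v : V, Finite {γ : Λ // (γ : Equiv.Perm V) v = v})
    (v : VQ Λ) [Finite (T.neighborSet (Quot.out v))] :
    ∑' f : {f : EQ T Λ // tailQ T Λ f = v}, (indQ T Λ f : ℝ) = degQ T Λ v := by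
  have := finite_tailFiber T Λ hAut v
  have := Fintype.ofFinite {f : EQ T Λ // tailQ T Λ f = v}
  have hind : ∀ f : {f : EQ T Λ // tailQ T Λ f = v},
      indQ T Λ f = Nat.card {w // neighborToEdge T Λ v w = f} := by
    intro f
    obtain ⟨w₀, rfl⟩ := neighborToEdge_surjective T Λ hAut v f
    exact (card_neighborToEdge_fiber T Λ hAut hFin v w₀).symm
  rw [tsum_fintype, degQ, ← Nat.card_congr (Equiv.sigmaFiberEquiv (neighborToEdge T Λ v)),
    Nat.card_sigma]
  push_cast
  simp only [hind]

noncomputable def edgeWeight (N : VQ Λ → ℝ) (e : EQ T Λ) : ℝ :=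
  indQ T Λ e / N (tailQ T Λ e)

section EdgeWeight

variable {N : VQ Λ → ℝ}

lemma edgeWeight_barQ (hFin : ∀ v : V, Finite {γ : Λ // (γ : Equiv.Perm V) v = v})
    (hN : ∀ e, N (headQ T Λ e) = deltaQ T Λ e * N (tailQ T Λ e)) (e : EQ T Λ) :
    edgeWeight T Λ N (barQ T Λ e) = edgeWeight T Λ N e := by
  have hbar := (indQ_pos T Λ hFin (barQ T Λ e)).ne'
  rw [edgeWeight, edgeWeight, tailQ_barQ, hN, deltaQ, div_mul_eq_mul_div, div_div_eq_mul_div,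
    mul_div_mul_left _ _ (Nat.cast_ne_zero.2 hbar)]

lemma tsum_edgeWeight_tailFiber (hAut : ∀ γ ∈ Λ, IsTreeAut T γ)
    (hFin : ∀ v : V, Finite {γ : Λ // (γ : Equiv.Perm V) v = v})
    (v : VQ Λ) [Finite (T.neighborSet (Quot.out v))] :
    ∑' g : {g : EQ T Λ // tailQ T Λ g = v}, edgeWeight T Λ N g = degQ T Λ v / N v := by
  calc _ = ∑' g : {g : EQ T Λ // tailQ T Λ g = v}, (indQ T Λ g : ℝ) / N v :=
        tsum_congr fun g => by rw [edgeWeight, g.2]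
    _ = _ := by rw [tsum_div_const, tsum_indQ_tailFiber T Λ hAut hFin]

lemma edgeWeight_barQ_mul_kerP (hFin : ∀ v : V, Finite {γ : Λ // (γ : Equiv.Perm V) v = v})
    (hN : ∀ e, N (headQ T Λ e) = deltaQ T Λ e * N (tailQ T Λ e)) {v : VQ Λ} {f : EQ T Λ}
    (hf : tailQ T Λ f = v) (g : {g : EQ T Λ // tailQ T Λ g = v}) :
    edgeWeight T Λ N (barQ T Λ g) * kerP T Λ (barQ T Λ g) f =
      (indQ T Λ g * indQ T Λ f - if g = ⟨f, hf⟩ then (indQ T Λ f : ℝ) else 0) /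
        (N v * ((degQ T Λ v : ℝ) - 1)) := by
  rw [edgeWeight_barQ T Λ hFin hN, edgeWeight, kerP,
    if_pos ((headQ_barQ T Λ g).trans (g.2.trans hf.symm)), barQ_barQ, headQ_barQ, g.2,
    div_mul_div_comm]
  by_cases hgf : g = ⟨f, hf⟩
  · rw [if_pos hgf, if_pos (congrArg Subtype.val hgf).symm, hgf]
    ring
  · rw [if_neg hgf, if_neg fun h => hgf (Subtype.ext h.symm)]
    ring

lemma tsum_edgeWeight_mul_kerP (hAut : ∀ γ ∈ Λ, IsTreeAut T γ)
    (hFin : ∀ v : V, Finite {γ : Λ // (γ : Equiv.Perm V) v = v})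
    (hdeg : ∀ v : VQ Λ, 2 ≤ degQ T Λ v)
    (hN : ∀ e, N (headQ T Λ e) = deltaQ T Λ e * N (tailQ T Λ e)) (f : EQ T Λ) :
    ∑' e, edgeWeight T Λ N e * kerP T Λ e f = edgeWeight T Λ N f := by
  set v := tailQ T Λ f
  have : Finite (T.neighborSet (Quot.out v)) :=
    Nat.finite_of_card_ne_zero (by have := hdeg v; rw [degQ] at this; omega)
  have := finite_tailFiber T Λ hAut v
  have hd : (degQ T Λ v : ℝ) - 1 ≠ 0 := by
    have : (2 : ℝ) ≤ degQ T Λ v := by exact_mod_cast hdeg v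
    linarith
  have hsupp : Function.support (fun e => edgeWeight T Λ N e * kerP T Λ e f) ⊆
      {e | headQ T Λ e = v} := by
    intro e he
    by_contra h
    exact he (by simp only [kerP, if_neg (show ¬headQ T Λ e = tailQ T Λ f from h), mul_zero])
  calc ∑' e, edgeWeight T Λ N e * kerP T Λ e f
      = ∑' e : {e : EQ T Λ // headQ T Λ e = v}, edgeWeight T Λ N e * kerP T Λ e f :=
        (tsum_subtype_eq_of_support_subset hsupp).symm
    _ = ∑' g : {g : EQ T Λ // tailQ T Λ g = v},
          edgeWeight T Λ N (barQ T Λ g) * kerP T Λ (barQ T Λ g) f :=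
        ((headFiberEquivTailFiber T Λ v).symm.tsum_eq
          (fun e => edgeWeight T Λ N e * kerP T Λ e f)).symm
    _ = (degQ T Λ v * indQ T Λ f - indQ T Λ f) / (N v * ((degQ T Λ v : ℝ) - 1)) := by
        rw [tsum_congr (edgeWeight_barQ_mul_kerP T Λ hFin hN rfl), tsum_div_const,
          Summable.tsum_sub .of_finite .of_finite, tsum_mul_right,
          tsum_indQ_tailFiber T Λ hAut hFin, tsum_ite_eq]
    _ = edgeWeight T Λ N f := by
        rw [← sub_one_mul, mul_comm ((degQ T Λ v : ℝ) - 1), mul_div_mul_right _ _ hd]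
        rfl

lemma summable_edgeWeight (hAut : ∀ γ ∈ Λ, IsTreeAut T γ)
    (hFin : ∀ v : V, Finite {γ : Λ // (γ : Equiv.Perm V) v = v})
    (hfin : ∀ v : VQ Λ, Finite (T.neighborSet (Quot.out v))) {D : ℕ}
    (hdeg : ∀ v : VQ Λ, degQ T Λ v ≤ D) (hNpos : ∀ v, 0 < N v)
    (hNsum : Summable fun v => (N v)⁻¹) : Summable (edgeWeight T Λ N) := by
  have hw : ∀ e, 0 ≤ edgeWeight T Λ N e := fun e => div_nonneg (Nat.cast_nonneg _) (hNpos _).le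
  have hσ : Summable fun x : Σ v, {g : EQ T Λ // tailQ T Λ g = v} => edgeWeight T Λ N x.2 := by
    rw [summable_sigma_of_nonneg fun _ => hw _]
    refine ⟨fun v => have := hfin v; have := finite_tailFiber T Λ hAut v; .of_finite, ?_⟩
    refine .of_nonneg_of_le (fun v => tsum_nonneg fun _ => hw _) (fun v => ?_)
      (hNsum.mul_left (D : ℝ))
    have := hfin v
    rw [tsum_edgeWeight_tailFiber T Λ hAut hFin, div_eq_mul_inv]
    exact mul_le_mul_of_nonneg_right (by exact_mod_cast hdeg v) (inv_nonneg.2 (hNpos v).le)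
  exact (Equiv.sigmaFiberEquiv (tailQ T Λ)).summable_iff.1 hσ

end EdgeWeight

lemma IsBiregularTree.card_neighborSet {T : SimpleGraph V} {d₁ d₂ : ℕ}
    (hT : IsBiregularTree T d₁ d₂) (v : V) :
    Nat.card (T.neighborSet v) = d₁ ∨ Nat.card (T.neighborSet v) = d₂ := by
  obtain ⟨-, -, c, -, h₁, h₂⟩ := hT
  cases hc : c v
  · exact .inr (h₂ v hc)
  · exact .inl (h₁ v hc)

/-- Proposition 6.3. The Markov chain associated to any tree lattice
is positive recurrent: it admits a stationary probability measure. -/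
theorem markov_chain_positive_recurrent {V : Type*} (T : SimpleGraph V)
    (d₁ d₂ : ℕ) (hd₁ : 3 ≤ d₁) (hd₂ : 3 ≤ d₂) (hT : IsBiregularTree T d₁ d₂)
    (Λ : Subgroup (Equiv.Perm V)) (hΛ : IsTreeLattice T Λ) :
    ∃ μ : EQ T Λ → ℝ, (∀ e, 0 ≤ μ e) ∧ (∑' e : EQ T Λ, μ e) = 1 ∧
      ∀ f : EQ T Λ, (∑' e : EQ T Λ, μ e * kerP T Λ e f) = μ f := by
  obtain ⟨hAut, hFin, o, N, -, hNpos, hN, hNsum⟩ := hΛ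
  have hdeg : ∀ v : VQ Λ, 3 ≤ degQ T Λ v ∧ degQ T Λ v ≤ max d₁ d₂ := fun v => by
    rcases hT.card_neighborSet (Quot.out v) with h | h <;> (rw [degQ, h]; omega)
  have hfin : ∀ v : VQ Λ, Finite (T.neighborSet (Quot.out v)) := fun v =>
    Nat.finite_of_card_ne_zero (by have := (hdeg v).1; rw [degQ] at this; omega)
  have hw : ∀ e, 0 < edgeWeight T Λ N e := fun e =>
    div_pos (Nat.cast_pos.2 (indQ_pos T Λ hFin e)) (hNpos _)
  obtain ⟨w⟩ : Nonempty (T.neighborSet (Quot.out o)) :=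
    (Nat.card_pos_iff.1 (by have := (hdeg o).1; rw [degQ] at this; omega)).1
  exact exists_stationary_probability_of_tsum_pos (kerP T Λ) (edgeWeight T Λ N)
    (fun e => (hw e).le)
    ((summable_edgeWeight T Λ hAut hFin hfin (fun v => (hdeg v).2) hNpos hNsum).tsum_pos
      (fun e => (hw e).le) (πE T Λ ⟨(_, w), w.2⟩) (hw _))
    (tsum_edgeWeight_mul_kerP T Λ hAut hFin (fun v => by have := (hdeg v).1; omega) hN)

end TreeDyn
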